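/- arXiv:2209.08804 — 2 statements merged into one kernel-verified Lean document; each statement's English description precedes it below -/
import Mathlib

section
/- For every even integer n ≥ 4, the Möbius ladder M_n has Frank number 2. -/
namespace Frank

variable {V : Type*}

/-- An orientation of a simple graph `G`: each edge gets exactly one direction. -/
structure Orient (G : SimpleGraph V) where
  dir : V → V → Prop
  dir_iff : ∀ u v, (dir u v ∨ dir v u) ↔ G.Adj u v
  not_both : ∀ u v, dir u v → ¬ dir v u

/-- A relation (digraph) is strongly connected. -/
def IsStrong (r : V → V → Prop) : Prop :=
  ∀ x y : V, Relation.ReflTransGen r x y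

/-- Delete the single arc `(u,v)` from the digraph `r`. -/
def delArc (r : V → V → Prop) (u v : V) : V → V → Prop :=
  fun a b => r a b ∧ ¬(a = u ∧ b = v)

/-- Delete (both possible arcs of) the edge `uv` from the digraph `r`. -/
def delEdge (r : V → V → Prop) (u v : V) : V → V → Prop :=
  fun a b => r a b ∧ ¬((a = u ∧ b = v) ∨ (a = v ∧ b = u))

/-- The edge `uv` is deletable in the orientation `O`: after removing its arc the
orientation stays strongly connected. -/
def EdgeDeletable {G : SimpleGraph V} (O : Orient G) (u v : V) : Prop :=
  IsStrong (delEdge O.dir u v)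

/-- The Frank number of `G`: the least `k` admitting `k` strongly connected orientations
such that every edge is deletable in at least one of them. -/
noncomputable def frankNumber (G : SimpleGraph V) : ℕ :=
  sInf {k | ∃ Os : Fin k → Orient G, (∀ i, IsStrong (Os i).dir) ∧
    ∀ u v, G.Adj u v → ∃ i, EdgeDeletable (Os i) u v}

/-- `G` is 2-edge-connected: connected and stays connected after deleting any single edge. -/
def TwoEdgeConn (G : SimpleGraph V) : Prop :=
  G.Connected ∧ ∀ e : Sym2 V, (G.deleteEdges {e}).Connected

/-- `G` is 3-edge-connected: connected and stays connected after deleting any two edges. -/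
def ThreeEdgeConn (G : SimpleGraph V) : Prop :=
  G.Connected ∧ ∀ e f : Sym2 V, (G.deleteEdges {e, f}).Connected

/-- The Möbius ladder `M n` on `ZMod n` (`n` even): cycle edges plus diagonals. -/
def mobiusLadder (n : ℕ) : SimpleGraph (ZMod n) :=
  SimpleGraph.fromRel (fun a b => b = a + 1 ∨ b = a + ((n / 2 : ℕ) : ZMod n))

/-!
Vertex `0` has degree three, and if all three edges at a vertex were deletable in one
orientation, its in- and out-arcs would have to split every pair of its edges; so one
orientation never suffices.

For two, write `n = 2k` and let `O` direct both halves `0 → 1 → ⋯ → k` and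
`0 → -1 → ⋯ → -k = k` of the rim from `0` to `k`, close both with the rung `k → 0`, and direct
an inner rung `{j, j + k}` (`0 < j < k`) upwards iff `j` is even. Deleting an inner rung
leaves both cycles intact. A rim arc `u → v` such that `u` is `0` or its rung leaves `u`, and
`v` is `k` or its rung enters `v`, has a detour through the other half of the rim; this holds
for every second rim edge of each half. The rotation `x ↦ x + 1` of `O` covers the remaining edges.
-/

open Relation

section Digraph

variable {W : Type*} {r : V → V → Prop}

lemma IsStrong.of_surjective {s : W → W → Prop} (f : V → W) (hf : Function.Surjective f)
    (hrs : ∀ a b, r a b → s (f a) (f b)) (hr : IsStrong r) : IsStrong s := by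
  intro x y
  obtain ⟨a, rfl⟩ := hf x
  obtain ⟨b, rfl⟩ := hf y
  exact ReflTransGen.lift f hrs a b (hr a b)

lemma delEdge_comm (r : V → V → Prop) (u v : V) : delEdge r u v = delEdge r v u := by
  funext a b
  simp only [delEdge, or_comm]

lemma IsStrong.delEdge_of_reflTransGen {u v : V} (hr : IsStrong r) (hvu : ¬ r v u)
    (huv : ReflTransGen (delEdge r u v) u v) : IsStrong (delEdge r u v) := by
  intro x y
  refine ReflTransGen.lift' id (fun a b hab => ?_) x y (hr x y)
  by_cases h : a = u ∧ b = v
  · obtain ⟨rfl, rfl⟩ := h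
    exact huv
  · refine .single ⟨hab, ?_⟩
    rintro (h' | ⟨rfl, rfl⟩)
    · exact h h'
    · exact hvu hab

lemma reflTransGen_of_cycle (c : ℕ → V) {m a b : ℕ} (h : ∀ t < m, r (c t) (c (t + 1)))
    (hm : r (c m) (c 0)) (ha : a ≤ m) (hb : b ≤ m) : ReflTransGen r (c a) (c b) := by
  have hpath : ∀ {i j}, i ≤ j → j ≤ m → ReflTransGen r (c i) (c j) := fun hij hj =>
    ReflTransGen.lift c (fun _ _ => id) _ _ <|
      reflTransGen_of_succ_of_le (fun i j => r (c i) (c j))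
        (fun i hi => by simpa using h i (hi.2.trans_le hj)) hij
  exact ((hpath ha le_rfl).tail hm).trans (hpath (Nat.zero_le b) hb)

end Digraph

section Deletable

variable {G : SimpleGraph V} {O : Orient G} {u v : V}

lemma EdgeDeletable.exists_out_arc (hne : u ≠ v) (h : EdgeDeletable O u v) :
    ∃ x ≠ v, O.dir u x := by
  rcases (h u v).cases_head with rfl | ⟨x, hx, -⟩
  · exact absurd rfl hne
  · exact ⟨x, fun hxv => hx.2 (.inl ⟨rfl, hxv⟩), hx.1⟩

lemma EdgeDeletable.exists_in_arc (hne : u ≠ v) (h : EdgeDeletable O u v) :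
    ∃ x ≠ v, O.dir x u := by
  rcases (h v u).cases_tail with rfl | ⟨x, -, hx⟩
  · exact absurd rfl hne
  · exact ⟨x, fun hxv => hx.2 (.inr ⟨hxv, rfl⟩), hx.1⟩

end Deletable

namespace Orient

variable {W : Type*} {G : SimpleGraph V} {H : SimpleGraph W} {O : Orient G} {u v : V}

def map (e : G ≃g H) (O : Orient G) : Orient H where
  dir a b := O.dir (e.symm a) (e.symm b)
  dir_iff _ _ := (O.dir_iff _ _).trans e.symm.map_adj_iff
  not_both _ _ := O.not_both _ _

lemma isStrong_map (e : G ≃g H) (h : IsStrong O.dir) : IsStrong (O.map e).dir :=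
  h.of_surjective e e.surjective fun a b hab => by simpa [map] using hab

lemma edgeDeletable_map (e : G ≃g H) (h : EdgeDeletable O u v) :
    EdgeDeletable (O.map e) (e u) (e v) :=
  h.of_surjective e e.surjective fun a b hab => by
    simpa [map, delEdge, e.injective.eq_iff] using hab

lemma edgeDeletable_comm : EdgeDeletable O u v ↔ EdgeDeletable O v u := by
  rw [EdgeDeletable, EdgeDeletable, delEdge_comm]

lemma delEdge_of_dir {a b : V} (huv : O.dir u v) (hab : O.dir a b) (hne : ¬ (a = u ∧ b = v)) :
    delEdge O.dir u v a b := by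
  refine ⟨hab, fun h => h.elim hne ?_⟩
  rintro ⟨rfl, rfl⟩
  exact O.not_both _ _ huv hab

lemma edgeDeletable_of_reflTransGen (hO : IsStrong O.dir) (huv : O.dir u v)
    (h : ReflTransGen (delEdge O.dir u v) u v) : EdgeDeletable O u v :=
  hO.delEdge_of_reflTransGen (O.not_both u v huv) h

lemma not_edgeDeletable_of_neighborSet_eq {v a b c : V} (hab : a ≠ b) (hac : a ≠ c)
    (hbc : b ≠ c) (hN : G.neighborSet v = {a, b, c}) :
    ¬ (EdgeDeletable O v a ∧ EdgeDeletable O v b ∧ EdgeDeletable O v c) := by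
  have hadj : ∀ {x}, G.Adj v x ↔ x = a ∨ x = b ∨ x = c := by
    simp [← SimpleGraph.mem_neighborSet, hN]
  have hin : ∀ {x}, G.Adj v x → (O.dir x v ↔ ¬ O.dir v x) := fun hx =>
    ⟨O.not_both _ _, ((O.dir_iff _ _).2 hx).resolve_left⟩
  have hsplit : ∀ w, EdgeDeletable O v w → G.Adj v w →
      (w ≠ a ∧ O.dir v a ∨ w ≠ b ∧ O.dir v b ∨ w ≠ c ∧ O.dir v c) ∧
      (w ≠ a ∧ ¬ O.dir v a ∨ w ≠ b ∧ ¬ O.dir v b ∨ w ≠ c ∧ ¬ O.dir v c) := by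
    intro w hw hvw
    obtain ⟨x, hxw, hx⟩ := hw.exists_out_arc hvw.ne
    obtain ⟨y, hyw, hy⟩ := hw.exists_in_arc hvw.ne
    have hy' := (hin ((O.dir_iff _ _).1 (.inr hy))).1 hy
    constructor
    · rcases hadj.1 ((O.dir_iff v x).1 (.inl hx)) with rfl | rfl | rfl <;> tauto
    · rcases hadj.1 ((O.dir_iff v y).1 (.inr hy)) with rfl | rfl | rfl <;> tauto
  rintro ⟨hda, hdb, hdc⟩
  have ha := hsplit a hda (hadj.2 (.inl rfl))
  have hb := hsplit b hdb (hadj.2 (.inr (.inl rfl)))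
  have hc := hsplit c hdc (hadj.2 (.inr (.inr rfl)))
  simp only [ne_eq, not_true_eq_false, false_and, false_or, or_false, hab, hac, hbc, hab.symm,
    hac.symm, hbc.symm, not_false_eq_true, true_and] at ha hb hc
  tauto

lemma two_le_of_forall_edgeDeletable {m : ℕ} {Os : Fin m → Orient G}
    (hcov : ∀ u w, G.Adj u w → ∃ i, EdgeDeletable (Os i) u w) {v a b c : V} (hab : a ≠ b)
    (hac : a ≠ c) (hbc : b ≠ c) (hN : G.neighborSet v = {a, b, c}) : 2 ≤ m := by
  have hadj : ∀ {x}, x = a ∨ x = b ∨ x = c → G.Adj v x := fun hx => by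
    rw [← SimpleGraph.mem_neighborSet, hN]
    simpa using hx
  by_contra! hm
  have : Subsingleton (Fin m) := Fin.subsingleton_iff_le_one.2 (by omega)
  obtain ⟨i, -⟩ := hcov v a (hadj (.inl rfl))
  have hdel : ∀ {x}, x = a ∨ x = b ∨ x = c → EdgeDeletable (Os i) v x := fun hx => by
    obtain ⟨j, hj⟩ := hcov v _ (hadj hx)
    rwa [Subsingleton.elim j i] at hj
  exact not_edgeDeletable_of_neighborSet_eq hab hac hbc hN
    ⟨hdel (.inl rfl), hdel (.inr (.inl rfl)), hdel (.inr (.inr rfl))⟩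

end Orient

lemma natCast_eq_natCast_of_lt {n a b : ℕ} (ha : a < n) (hb : b < n)
    (h : (a : ZMod n) = b) : a = b :=
  CharP.natCast_injOn_Iio (ZMod n) n ha hb h

lemma natCast_ne_zero_of_lt {n a : ℕ} (h0 : 0 < a) (ha : a < n) : (a : ZMod n) ≠ 0 :=
  fun h => h0.ne' (natCast_eq_natCast_of_lt ha (by omega) (by simpa using h))

section MobiusLadder

lemma mobiusLadder_adj_add_right {n : ℕ} (c : ZMod n) {u v : ZMod n} :
    (mobiusLadder n).Adj (u + c) (v + c) ↔ (mobiusLadder n).Adj u v := by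
  simp only [mobiusLadder, SimpleGraph.fromRel_adj, add_right_comm _ c, add_left_inj, ne_eq]

def mobiusLadderAddRight {n : ℕ} (c : ZMod n) : mobiusLadder n ≃g mobiusLadder n where
  toEquiv := Equiv.addRight c
  map_rel_iff' := mobiusLadder_adj_add_right c

lemma mobiusLadderAddRight_apply {n : ℕ} (c x : ZMod n) : mobiusLadderAddRight c x = x + c :=
  rfl

variable {k : ℕ}

lemma mobiusLadder_two_mul_adj {u v : ZMod (2 * k)} :
    (mobiusLadder (2 * k)).Adj u v ↔
      u ≠ v ∧ (v = u + 1 ∨ v = u + k ∨ u = v + 1 ∨ u = v + k) := by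
  rw [mobiusLadder, SimpleGraph.fromRel_adj, Nat.mul_div_cancel_left k two_pos]
  tauto

lemma one_ne_zero_of_pos (hk : 0 < k) : (1 : ZMod (2 * k)) ≠ 0 := by
  exact_mod_cast natCast_ne_zero_of_lt (n := 2 * k) one_pos (by omega)

lemma two_ne_zero_of_two_le (hk : 2 ≤ k) : (2 : ZMod (2 * k)) ≠ 0 := by
  exact_mod_cast natCast_ne_zero_of_lt (n := 2 * k) two_pos (by omega)

lemma half_ne_zero (hk : 0 < k) : (k : ZMod (2 * k)) ≠ 0 :=
  natCast_ne_zero_of_lt hk (by omega)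

lemma half_ne_one (hk : 2 ≤ k) : (k : ZMod (2 * k)) ≠ 1 := fun h =>
  absurd (natCast_eq_natCast_of_lt (n := 2 * k) (by omega) (by omega) (h.trans Nat.cast_one.symm))
    (by omega)

lemma half_add_one_ne_zero (hk : 2 ≤ k) : (k : ZMod (2 * k)) + 1 ≠ 0 := by
  exact_mod_cast natCast_ne_zero_of_lt (n := 2 * k) (a := k + 1) (by omega) (by omega)

lemma half_add_half : (k : ZMod (2 * k)) + k = 0 := by
  rw [← Nat.cast_add, ← two_mul, ZMod.natCast_self]

lemma neg_half : -(k : ZMod (2 * k)) = k :=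
  neg_eq_of_add_eq_zero_left half_add_half

lemma natCast_add_half {j : ℕ} (hj : j ≤ k) :
    (j : ZMod (2 * k)) + k = -((k - j : ℕ) : ZMod (2 * k)) := by
  rw [Nat.cast_sub hj]
  linear_combination half_add_half (k := k)

lemma val_add_half_lt_iff (hk : 0 < k) (u : ZMod (2 * k)) : (u + k).val < k ↔ k ≤ u.val := by
  have : NeZero (2 * k) := ⟨by omega⟩
  have hu := u.val_lt
  rw [ZMod.val_add, ZMod.val_natCast_of_lt (by omega : k < 2 * k)]
  rcases lt_or_ge u.val k with h | h
  · rw [Nat.mod_eq_of_lt (by omega)]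
    omega
  · rw [Nat.mod_eq_sub_mod (by omega), Nat.mod_eq_of_lt (by omega)]
    omega

lemma exists_eq_natCast_or_eq_neg (hk : 0 < k) (x : ZMod (2 * k)) :
    (∃ t < k, x = t) ∨ ∃ m < k, x = -((m : ZMod (2 * k)) + 1) := by
  have : NeZero (2 * k) := ⟨by omega⟩
  have hx := x.val_lt
  rcases lt_or_ge x.val k with h | h
  · exact .inl ⟨x.val, h, (ZMod.natCast_zmod_val x).symm⟩
  refine .inr ⟨2 * k - 1 - x.val, by omega, ?_⟩
  rw [eq_neg_iff_add_eq_zero]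
  calc x + ((2 * k - 1 - x.val : ℕ) + 1)
      = ((x.val + (2 * k - 1 - x.val) + 1 : ℕ) : ZMod (2 * k)) := by
        push_cast [ZMod.natCast_zmod_val]
        ring
    _ = 0 := by rw [show x.val + (2 * k - 1 - x.val) + 1 = 2 * k by omega, ZMod.natCast_self]

section Cycles

variable {r : ZMod (2 * k) → ZMod (2 * k) → Prop}

lemma reflTransGen_natCast_of_cycle (hL : ∀ t < k, r t (t + 1)) (hK : r k 0) {a b : ℕ}
    (ha : a ≤ k) (hb : b ≤ k) : ReflTransGen r a b :=
  reflTransGen_of_cycle (fun t : ℕ => (t : ZMod (2 * k))) (fun t ht => by simpa using hL t ht)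
    (by simpa using hK) ha hb

lemma reflTransGen_neg_natCast_of_cycle (hU : ∀ t < k, r (-t) (-(t + 1))) (hK : r k 0)
    {a b : ℕ} (ha : a ≤ k) (hb : b ≤ k) : ReflTransGen r (-a) (-b) :=
  reflTransGen_of_cycle (fun t : ℕ => -(t : ZMod (2 * k))) (fun t ht => by simpa using hU t ht)
    (by simpa [neg_half] using hK) ha hb

lemma isStrong_of_cycles (hk : 0 < k) (hL : ∀ t < k, r t (t + 1))
    (hU : ∀ t < k, r (-t) (-(t + 1))) (hK : r k 0) : IsStrong r := by
  have hhub : ∀ x, ReflTransGen r x 0 ∧ ReflTransGen r 0 x := by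
    intro x
    rcases exists_eq_natCast_or_eq_neg hk x with ⟨t, ht, rfl⟩ | ⟨m, hm, rfl⟩
    · have h₁ := reflTransGen_natCast_of_cycle hL hK ht.le (Nat.zero_le k)
      have h₂ := reflTransGen_natCast_of_cycle hL hK (Nat.zero_le k) ht.le
      rw [Nat.cast_zero] at h₁ h₂
      exact ⟨h₁, h₂⟩
    · have h₁ := reflTransGen_neg_natCast_of_cycle hU hK (a := m + 1) hm (Nat.zero_le k)
      have h₂ := reflTransGen_neg_natCast_of_cycle hU hK (b := m + 1) (Nat.zero_le k) hm
      rw [Nat.cast_zero, neg_zero, Nat.cast_succ] at h₁ h₂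
      exact ⟨h₁, h₂⟩
  exact fun x y => (hhub x).1.trans (hhub y).2

end Cycles

/-- `u.val < k` singles out the lower half of the rim and the lower end of each rung. -/
def mobiusOrient (hk : 2 ≤ k) : Orient (mobiusLadder (2 * k)) where
  dir u v := (v = u + 1 ∧ u.val < k) ∨ (u = v + 1 ∧ k ≤ v.val) ∨
    (v = u + k ∧ u.val < k ∧ (Even u.val ∧ 0 < u.val)) ∨
    (u = v + k ∧ v.val < k ∧ ¬ (Even v.val ∧ 0 < v.val))
  dir_iff u v := by
    have h1 := one_ne_zero_of_pos (k := k) (by omega)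
    have hK0 := half_ne_zero (k := k) (by omega)
    have hKK := half_add_half (k := k)
    have hval := val_add_half_lt_iff (k := k) (by omega)
    rw [mobiusLadder_two_mul_adj]
    grind
  not_both u v := by
    have h2 := two_ne_zero_of_two_le hk
    have hK1 := half_ne_one hk
    have hK1' := half_add_one_ne_zero hk
    have hKK := half_add_half (k := k)
    have hval := val_add_half_lt_iff (k := k) (by omega)
    grind

section Orientation

variable (hk : 2 ≤ k)

lemma mobiusOrient_dir_natCast_succ {t : ℕ} (ht : t < k) :
    (mobiusOrient hk).dir t (t + 1) :=
  .inl ⟨rfl, by rwa [ZMod.val_natCast_of_lt (by omega)]⟩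

lemma mobiusOrient_dir_neg_natCast {t : ℕ} (ht : t < k) :
    (mobiusOrient hk).dir (-t) (-(t + 1)) := by
  have h : -((t : ZMod (2 * k)) + 1) = ((2 * k - (t + 1) : ℕ) : ZMod (2 * k)) := by
    rw [Nat.cast_sub (by omega), ZMod.natCast_self]
    push_cast
    ring
  refine .inr (.inl ⟨by ring, ?_⟩)
  rw [h, ZMod.val_natCast_of_lt (by omega)]
  omega

lemma mobiusOrient_dir_rung_up {j : ℕ} (h0 : 0 < j) (hj : j < k) (he : Even j) :
    (mobiusOrient hk).dir j (j + k) := by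
  refine .inr (.inr (.inl ⟨rfl, ?_⟩))
  rw [ZMod.val_natCast_of_lt (by omega)]
  exact ⟨hj, he, h0⟩

lemma mobiusOrient_dir_rung_down {j : ℕ} (hj : j < k) (h : ¬ (Even j ∧ 0 < j)) :
    (mobiusOrient hk).dir (j + k) j := by
  refine .inr (.inr (.inr ⟨rfl, ?_⟩))
  rw [ZMod.val_natCast_of_lt (by omega)]
  exact ⟨hj, h⟩

lemma mobiusOrient_dir_half_zero : (mobiusOrient hk).dir k 0 := by
  simpa using mobiusOrient_dir_rung_down hk (j := 0) (by omega) (by simp)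

lemma isStrong_mobiusOrient : IsStrong (mobiusOrient hk).dir :=
  isStrong_of_cycles (by omega) (fun _ => mobiusOrient_dir_natCast_succ hk)
    (fun _ => mobiusOrient_dir_neg_natCast hk) (mobiusOrient_dir_half_zero hk)

lemma mobiusOrient_edgeDeletable_natCast_add_half {j : ℕ} (h0 : 0 < j) (hj : j < k) :
    EdgeDeletable (mobiusOrient hk) j (j + k) := by
  have hK1 := half_ne_one hk
  have hK1' := half_add_one_ne_zero hk
  have hKK := half_add_half (k := k)
  have hj0 := natCast_ne_zero_of_lt (n := 2 * k) h0 (by omega)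
  have hjK : (j : ZMod (2 * k)) ≠ k := fun h =>
    hj.ne (natCast_eq_natCast_of_lt (by omega) (by omega) h)
  refine isStrong_of_cycles (by omega)
    (fun t ht => ⟨mobiusOrient_dir_natCast_succ hk ht, ?_⟩)
    (fun t ht => ⟨mobiusOrient_dir_neg_natCast hk ht, ?_⟩)
    ⟨mobiusOrient_dir_half_zero hk, ?_⟩
  all_goals grind

lemma mobiusOrient_edgeDeletable_natCast_succ {i : ℕ} (hi : i < k) (he : Even i) :
    EdgeDeletable (mobiusOrient hk) i (i + 1) := by
  have h2 := two_ne_zero_of_two_le hk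
  have hK1 := half_ne_one hk
  have hK1' := half_add_one_ne_zero hk
  have hKK := half_add_half (k := k)
  have hi' := mobiusOrient_dir_natCast_succ hk hi
  set r := delEdge (mobiusOrient hk).dir (i : ZMod (2 * k)) (i + 1)
  have hU : ∀ t < k, r (-t) (-(t + 1)) := fun t ht =>
    Orient.delEdge_of_dir hi' (mobiusOrient_dir_neg_natCast hk ht) (by grind)
  have hK : r k 0 := Orient.delEdge_of_dir hi' (mobiusOrient_dir_half_zero hk) (by grind)
  have hup : ∀ j, 0 < j → j < k → Even j → r j (j + k) := fun j h0 hj he =>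
    Orient.delEdge_of_dir hi' (mobiusOrient_dir_rung_up hk h0 hj he) (by grind)
  have hdown : ∀ j < k, ¬ (Even j ∧ 0 < j) → r (j + k) j := fun j hj h =>
    Orient.delEdge_of_dir hi' (mobiusOrient_dir_rung_down hk hj h) (by grind)
  have hstart : ∃ a ≤ k, ReflTransGen r i (-a) := by
    rcases Nat.eq_zero_or_pos i with rfl | h0
    · exact ⟨0, Nat.zero_le k, by simpa using ReflTransGen.refl⟩
    · exact ⟨k - i, by omega, .single (natCast_add_half hi.le ▸ hup i h0 hi he)⟩
  have hend : ∃ b ≤ k, ReflTransGen r (-b) (i + 1) := by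
    rcases (Nat.succ_le_of_lt hi).eq_or_lt with h | h
    · have hik : (i : ZMod (2 * k)) + 1 = k := by
        rw [← Nat.cast_succ]
        exact congrArg Nat.cast h
      exact ⟨k, le_rfl, by rw [neg_half, hik]⟩
    · have hodd : ¬ (Even (i + 1) ∧ 0 < i + 1) := by
        rw [Nat.even_add_one]
        tauto
      refine ⟨k - (i + 1), by omega, .single ?_⟩
      have h₁ := hdown (i + 1) h hodd
      rwa [natCast_add_half h.le, Nat.cast_succ] at h₁
  obtain ⟨a, ha, h₁⟩ := hstart
  obtain ⟨b, hb, h₂⟩ := hend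
  exact Orient.edgeDeletable_of_reflTransGen (isStrong_mobiusOrient hk) hi'
    (h₁.trans ((reflTransGen_neg_natCast_of_cycle hU hK ha hb).trans h₂))

lemma mobiusOrient_edgeDeletable_neg_natCast {m : ℕ} (hm : m < k) (ho : ¬ Even (k - m)) :
    EdgeDeletable (mobiusOrient hk) (-m) (-(m + 1)) := by
  have h2 := two_ne_zero_of_two_le hk
  have hK1 := half_ne_one hk
  have hK1' := half_add_one_ne_zero hk
  have hKK := half_add_half (k := k)
  have hm1 : (m : ZMod (2 * k)) + 1 ≠ 0 := by
    exact_mod_cast natCast_ne_zero_of_lt (n := 2 * k) (a := m + 1) (by omega) (by omega)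
  have hm' := mobiusOrient_dir_neg_natCast hk hm
  set r := delEdge (mobiusOrient hk).dir (-(m : ZMod (2 * k))) (-(m + 1))
  have hL : ∀ t < k, r t (t + 1) := fun t ht =>
    Orient.delEdge_of_dir hm' (mobiusOrient_dir_natCast_succ hk ht) (by grind)
  have hK : r k 0 := Orient.delEdge_of_dir hm' (mobiusOrient_dir_half_zero hk) (by grind)
  have hup : ∀ j, 0 < j → j < k → Even j → r j (j + k) := fun j h0 hj he =>
    Orient.delEdge_of_dir hm' (mobiusOrient_dir_rung_up hk h0 hj he) (by grind)
  have hdown : ∀ j < k, ¬ (Even j ∧ 0 < j) → r (j + k) j := fun j hj h =>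
    Orient.delEdge_of_dir hm' (mobiusOrient_dir_rung_down hk hj h) (by grind)
  have hstart : ∃ a ≤ k, ReflTransGen r (-m) a := by
    rcases Nat.eq_zero_or_pos m with rfl | h0
    · exact ⟨0, Nat.zero_le k, by simpa using ReflTransGen.refl⟩
    · refine ⟨k - m, by omega, .single ?_⟩
      have h₁ := hdown (k - m) (by omega) (fun h => ho h.1)
      rwa [natCast_add_half (by omega), Nat.sub_sub_self hm.le] at h₁
  have hend : ∃ b ≤ k, ReflTransGen r b (-(m + 1)) := by
    rcases (Nat.succ_le_of_lt hm).eq_or_lt with h | h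
    · have hmk : (m : ZMod (2 * k)) + 1 = k := by
        rw [← Nat.cast_succ]
        exact congrArg Nat.cast h
      exact ⟨k, le_rfl, by rw [hmk, neg_half]⟩
    · have heven : Even (k - (m + 1)) := by
        rw [Nat.even_iff] at ho ⊢
        omega
      refine ⟨k - (m + 1), by omega, .single ?_⟩
      have h₁ := hup (k - (m + 1)) (by omega) (by omega) heven
      rwa [natCast_add_half (by omega), Nat.sub_sub_self h.le, Nat.cast_succ] at h₁
  obtain ⟨a, ha, h₁⟩ := hstart
  obtain ⟨b, hb, h₂⟩ := hend
  exact Orient.edgeDeletable_of_reflTransGen (isStrong_mobiusOrient hk) hm'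
    (h₁.trans ((reflTransGen_natCast_of_cycle hL hK ha hb).trans h₂))

lemma mobiusOrient_edgeDeletable_add_one_or_sub_one (x : ZMod (2 * k)) :
    EdgeDeletable (mobiusOrient hk) x (x + 1) ∨ EdgeDeletable (mobiusOrient hk) (x - 1) x := by
  rcases exists_eq_natCast_or_eq_neg (by omega) x with ⟨t, ht, rfl⟩ | ⟨m, hm, rfl⟩
  · rcases Nat.even_or_odd' t with ⟨s, rfl | rfl⟩
    · exact .inl (mobiusOrient_edgeDeletable_natCast_succ hk ht (even_two_mul s))
    · refine .inr ?_
      convert mobiusOrient_edgeDeletable_natCast_succ hk (i := 2 * s) (by omega)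
        (even_two_mul s) using 2 <;> push_cast <;> ring
  · by_cases ho : Even (k - m)
    · have hm' : m + 1 < k := by
        rw [Nat.even_iff] at ho
        omega
      have ho' : ¬ Even (k - (m + 1)) := by
        rw [Nat.even_iff] at ho ⊢
        omega
      refine .inr ?_
      convert Orient.edgeDeletable_comm.1
        (mobiusOrient_edgeDeletable_neg_natCast hk hm' ho') using 2 <;> push_cast <;> ring
    · refine .inl ?_
      convert Orient.edgeDeletable_comm.1 (mobiusOrient_edgeDeletable_neg_natCast hk hm ho)
        using 2
      ring

lemma mobiusOrient_edgeDeletable_add_half_or_sub_one (x : ZMod (2 * k)) :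
    EdgeDeletable (mobiusOrient hk) x (x + k) ∨
      EdgeDeletable (mobiusOrient hk) (x - 1) (x + k - 1) := by
  have hKK := half_add_half (k := k)
  have hlast := mobiusOrient_edgeDeletable_natCast_add_half hk (j := k - 1) (by omega) (by omega)
  rw [Nat.cast_pred (by omega)] at hlast
  rcases exists_eq_natCast_or_eq_neg (by omega) x with ⟨t, ht, rfl⟩ | ⟨m, hm, rfl⟩
  · rcases Nat.eq_zero_or_pos t with rfl | h0
    · refine .inr ?_
      convert Orient.edgeDeletable_comm.1 hlast using 2 <;> push_cast <;> grind
    · exact .inl (mobiusOrient_edgeDeletable_natCast_add_half hk h0 ht)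
  · rcases (Nat.succ_le_of_lt hm).eq_or_lt with h | h
    · have hmk : (m : ZMod (2 * k)) + 1 = k := by
        rw [← Nat.cast_succ]
        exact congrArg Nat.cast h
      refine .inr ?_
      convert hlast using 2 <;> grind
    · refine .inl ?_
      convert Orient.edgeDeletable_comm.1 (mobiusOrient_edgeDeletable_natCast_add_half hk
        (j := k - (m + 1)) (by omega) (by omega)) using 2 <;>
        push_cast [Nat.cast_sub h.le] <;> grind

lemma mobiusOrient_edgeDeletable_or_sub_one {u v : ZMod (2 * k)}
    (huv : (mobiusLadder (2 * k)).Adj u v) :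
    EdgeDeletable (mobiusOrient hk) u v ∨ EdgeDeletable (mobiusOrient hk) (u - 1) (v - 1) := by
  have hswap {a b c d : ZMod (2 * k)} :
      EdgeDeletable (mobiusOrient hk) a b ∨ EdgeDeletable (mobiusOrient hk) c d →
        EdgeDeletable (mobiusOrient hk) b a ∨ EdgeDeletable (mobiusOrient hk) d c :=
    Or.imp Orient.edgeDeletable_comm.1 Orient.edgeDeletable_comm.1
  rcases mobiusLadder_two_mul_adj.1 huv with ⟨-, rfl | rfl | rfl | rfl⟩
  · simpa using mobiusOrient_edgeDeletable_add_one_or_sub_one hk u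
  · exact mobiusOrient_edgeDeletable_add_half_or_sub_one hk u
  · simpa using hswap (mobiusOrient_edgeDeletable_add_one_or_sub_one hk v)
  · exact hswap (mobiusOrient_edgeDeletable_add_half_or_sub_one hk v)

end Orientation

lemma mobiusLadder_exists_two_orient (hk : 2 ≤ k) :
    ∃ Os : Fin 2 → Orient (mobiusLadder (2 * k)), (∀ i, IsStrong (Os i).dir) ∧
      ∀ u v, (mobiusLadder (2 * k)).Adj u v → ∃ i, EdgeDeletable (Os i) u v := by
  let e := mobiusLadderAddRight (n := 2 * k) 1
  refine ⟨![mobiusOrient hk, (mobiusOrient hk).map e], fun i => ?_, fun u v huv => ?_⟩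
  · fin_cases i
    · exact isStrong_mobiusOrient hk
    · exact Orient.isStrong_map e (isStrong_mobiusOrient hk)
  · rcases mobiusOrient_edgeDeletable_or_sub_one hk huv with h | h
    · exact ⟨0, h⟩
    · exact ⟨1, by simpa [e, mobiusLadderAddRight_apply] using Orient.edgeDeletable_map e h⟩

lemma mobiusLadder_neighborSet_zero (hk : 2 ≤ k) :
    (mobiusLadder (2 * k)).neighborSet 0 = {1, -1, (k : ZMod (2 * k))} := by
  have h1 := one_ne_zero_of_pos (k := k) (by omega)
  have hK0 := half_ne_zero (k := k) (by omega)
  have hKK := half_add_half (k := k)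
  ext x
  simp only [SimpleGraph.mem_neighborSet, mobiusLadder_two_mul_adj, Set.mem_insert_iff,
    Set.mem_singleton_iff]
  grind

end MobiusLadder

theorem stmt_7 (n : ℕ) (hn : 4 ≤ n) (hev : Even n) : frankNumber (mobiusLadder n) = 2 := by
  obtain ⟨k, rfl⟩ := hev.two_dvd
  have hk : 2 ≤ k := by omega
  have hcover := mobiusLadder_exists_two_orient hk
  refine le_antisymm (Nat.sInf_le hcover) (le_csInf ⟨2, hcover⟩ ?_)
  rintro m ⟨Os, -, hcov⟩
  have h2 := two_ne_zero_of_two_le hk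
  exact Orient.two_le_of_forall_edgeDeletable hcov (fun h => h2 (by linear_combination h))
    (half_ne_one hk).symm (fun h => half_add_one_ne_zero hk (by linear_combination -h))
    (mobiusLadder_neighborSet_zero hk)

end Frank
end

section
/- Let G be a 3-edge-connected graph and let v be any vertex of G of degree at least 3. Then there exists a perfect matching M between the neighbours of v and the vertices of the new cycle such that the local cubic modification G_v(M) is 3-edge-connected, even when v is a cut vertex of G. -/
namespace Frank

variable {V : Type*}

/-- The underlying relation of the local cubic modification of `G` at `v`:
`v` is replaced by a cycle on `ZMod d`, and `m` matches the cycle vertices to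
the former neighbours of `v`. -/
def lcmRel (G : SimpleGraph V) (v : V) (d : ℕ) (m : ZMod d → V) :
    ({w : V // w ≠ v} ⊕ ZMod d) → ({w : V // w ≠ v} ⊕ ZMod d) → Prop
  | Sum.inl w, Sum.inl w' => G.Adj w.1 w'.1
  | Sum.inl w, Sum.inr i => w.1 = m i
  | Sum.inr i, Sum.inr j => j = i + 1
  | Sum.inr _, Sum.inl _ => False

/-- The local cubic modification `G_v(M)` of `G` at `v` given the matching `m`. -/
def localCubicMod (G : SimpleGraph V) (v : V) (d : ℕ) (m : ZMod d → V) :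
    SimpleGraph ({w : V // w ≠ v} ⊕ ZMod d) :=
  SimpleGraph.fromRel (lcmRel G v d m)

/-!
Order the neighbours of `v` around the new cycle so that, if `t` components of `G - v` meet them,
positions `0, …, t - 1` hold one neighbour from each of these components and positions
`t, …, 2t - 1` hold a second one from each, in the same order; 3-edge-connectivity gives every
component at least two (indeed three) neighbours of `v`, so this is possible.

Let `S` be a proper nonempty vertex set of the new graph. If the cycle avoids `S` (or `Sᶜ`),
contracting it back to `v` turns the cut of `S` into a cut of `G`, which has three edges.
Otherwise the cycle contributes two cut edges. A third one is either an edge at an old vertex,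
or else every component of `G - v` lies on one side together with its cycle vertices; then two
components on opposite sides alternate as `i < j < i + t < j + t` around the cycle, and the cycle
alone contributes three cut edges.
-/

open SimpleGraph Set

section EdgeCut

variable {W : Type*} {H : SimpleGraph W} {S : Set W}

def edgeCut (H : SimpleGraph W) (S : Set W) : Set (Sym2 W) :=
  {e | ∃ a ∈ S, ∃ b ∉ S, H.Adj a b ∧ s(a, b) = e}

lemma mk_mem_edgeCut {a b : W} (hab : H.Adj a b) (h : ¬(a ∈ S ↔ b ∈ S)) :
    s(a, b) ∈ edgeCut H S := by
  by_cases ha : a ∈ S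
  · exact ⟨a, ha, b, fun hb => h (iff_of_true ha hb), hab, rfl⟩
  · exact ⟨b, by tauto, a, ha, hab.symm, Sym2.eq_swap⟩

lemma edgeCut_compl : edgeCut H Sᶜ = edgeCut H S := by
  ext e
  constructor
  · rintro ⟨a, ha, b, hb, hab, rfl⟩
    exact ⟨b, not_not.1 hb, a, ha, hab.symm, Sym2.eq_swap⟩
  · rintro ⟨a, ha, b, hb, hab, rfl⟩
    exact ⟨b, hb, a, not_not.2 ha, hab.symm, Sym2.eq_swap⟩

lemma exists_boundary_adj_of_reachable {x y : W} (hxy : H.Reachable x y) (hx : x ∈ S)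
    (hy : y ∉ S) : ∃ a ∈ S, ∃ b ∉ S, H.Adj a b := by
  obtain ⟨p⟩ := hxy
  obtain ⟨dart, -, ha, hb⟩ := p.exists_boundary_dart S hx hy
  exact ⟨_, ha, _, hb, dart.adj⟩

lemma three_le_encard_of_mem {α : Type*} {s : Set α} {x y z : α} (hxy : x ≠ y) (hxz : x ≠ z)
    (hyz : y ≠ z) (hx : x ∈ s) (hy : y ∈ s) (hz : z ∈ s) : 3 ≤ s.encard := by
  rw [← encard_eq_three.2 ⟨x, y, z, hxy, hxz, hyz, rfl⟩]
  exact encard_le_encard (by simp [insert_subset_iff, hx, hy, hz])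

lemma threeEdgeConn_iff_three_le_encard_edgeCut :
    ThreeEdgeConn H ↔ Nonempty W ∧ ∀ S : Set W, S.Nonempty → Sᶜ.Nonempty →
      3 ≤ (edgeCut H S).encard := by
  constructor
  · rintro ⟨hconn, hdel⟩
    refine ⟨hconn.nonempty, fun S ⟨x, hx⟩ ⟨y, hy⟩ => ?_⟩
    have avoid : ∀ e f, ∃ g ∈ edgeCut H S, g ≠ e ∧ g ≠ f := by
      intro e f
      obtain ⟨a, ha, b, hb, hab⟩ :=
        exists_boundary_adj_of_reachable ((hdel e f).preconnected x y) hx hy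
      rw [deleteEdges_adj] at hab
      exact ⟨s(a, b), ⟨a, ha, b, hb, hab.1, rfl⟩, by simpa [not_or] using hab.2⟩
    obtain ⟨g₁, hg₁, -⟩ := avoid s(x, x) s(x, x)
    obtain ⟨g₂, hg₂, h₂₁, -⟩ := avoid g₁ g₁
    obtain ⟨g₃, hg₃, h₃₁, h₃₂⟩ := avoid g₁ g₂
    exact three_le_encard_of_mem h₂₁.symm h₃₁.symm h₃₂.symm hg₁ hg₂ hg₃
  · rintro ⟨hne, hcut⟩
    have hpre : ∀ e f : Sym2 W, (H.deleteEdges {e, f}).Preconnected := by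
      intro e f x y
      by_contra hxy
      have hsub : edgeCut H {z | (H.deleteEdges {e, f}).Reachable x z} ⊆ {e, f} := by
        rintro _ ⟨a, ha, b, hb, hab, rfl⟩
        by_contra hef
        exact hb (ha.trans (Adj.reachable (by rw [deleteEdges_adj]; exact ⟨hab, hef⟩)))
      have : (3 : ℕ∞) ≤ 2 := calc
        3 ≤ _ := hcut _ ⟨x, Reachable.refl x⟩ ⟨y, hxy⟩
        _ ≤ ({e, f} : Set (Sym2 W)).encard := encard_le_encard hsub
        _ ≤ ({f} : Set (Sym2 W)).encard + 1 := encard_insert_le _ _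
        _ = 2 := by rw [encard_singleton]; rfl
      exact absurd this (by decide)
    refine ⟨(connected_iff _).2 ⟨fun x y => ?_, hne⟩,
      fun e f => (connected_iff _).2 ⟨hpre e f, hne⟩⟩
    exact (hpre s(x, x) s(x, x) x y).mono (deleteEdges_le _)

end EdgeCut

section CycleBoundary

variable {d : ℕ}

lemma exists_change_between (Q : ℕ → Prop) {a b : ℕ} (hab : a ≤ b) (h : ¬(Q a ↔ Q b)) :
    ∃ k, a ≤ k ∧ k < b ∧ ¬(Q k ↔ Q (k + 1)) := by
  induction b, hab using Nat.le_induction with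
  | base => exact absurd Iff.rfl h
  | succ b hab ih =>
    by_cases hb : Q a ↔ Q b
    · exact ⟨b, hab, b.lt_succ_self, fun h' => h (hb.trans h')⟩
    · obtain ⟨k, hak, hkb, hk⟩ := ih hb
      exact ⟨k, hak, hkb.trans b.lt_succ_self, hk⟩

lemma natCast_ne_natCast_of_lt_of_lt_add {k l : ℕ} (hkl : k < l) (hlk : l < k + d) :
    (k : ZMod d) ≠ l := by
  rw [Ne, ZMod.natCast_eq_natCast_iff, Nat.modEq_iff_dvd' hkl.le]
  exact fun hdvd => absurd (Nat.le_of_dvd (by omega) hdvd) (by omega)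

def cycleBoundary (A : Set (ZMod d)) : Set (ZMod d) :=
  {k | ¬(k ∈ A ↔ k + 1 ∈ A)}

variable {A : Set (ZMod d)}

lemma exists_natCast_mem_cycleBoundary {p q : ℕ} (hpq : p ≤ q)
    (h : ¬((p : ZMod d) ∈ A ↔ (q : ZMod d) ∈ A)) :
    ∃ k, p ≤ k ∧ k < q ∧ (k : ZMod d) ∈ cycleBoundary A := by
  obtain ⟨k, hpk, hkq, hk⟩ := exists_change_between (fun n => (n : ZMod d) ∈ A) hpq h
  exact ⟨k, hpk, hkq, by simpa [cycleBoundary] using hk⟩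

lemma two_le_encard_cycleBoundary [NeZero d] {a b : ZMod d} (ha : a ∈ A) (hb : b ∉ A) :
    2 ≤ (cycleBoundary A).encard := by
  have hba : (b - a).val < d := ZMod.val_lt _
  have hq : ((a.val + (b - a).val : ℕ) : ZMod d) = b := by simp
  have hd : ((a.val + d : ℕ) : ZMod d) = a := by simp
  obtain ⟨k, hk, hk', hkA⟩ := exists_natCast_mem_cycleBoundary (A := A)
    (Nat.le_add_right a.val (b - a).val) (by rw [hq, ZMod.natCast_zmod_val]; tauto)
  obtain ⟨l, hl, hl', hlA⟩ := exists_natCast_mem_cycleBoundary (A := A)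
    (p := a.val + (b - a).val) (q := a.val + d) (by omega) (by rw [hq, hd]; tauto)
  have hkl : (k : ZMod d) ≠ l := natCast_ne_natCast_of_lt_of_lt_add (by omega) (by omega)
  rw [← encard_pair hkl]
  exact encard_le_encard (by simp [insert_subset_iff, hkA, hlA])

lemma three_le_encard_cycleBoundary {p₀ p₁ p₂ p₃ : ℕ} (h₀₁ : p₀ ≤ p₁) (h₁₂ : p₁ ≤ p₂)
    (h₂₃ : p₂ ≤ p₃) (h₃₀ : p₃ ≤ p₀ + d) (hne : ¬((p₀ : ZMod d) ∈ A ↔ (p₁ : ZMod d) ∈ A))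
    (h₂ : (p₂ : ZMod d) ∈ A ↔ (p₀ : ZMod d) ∈ A) (h₃ : (p₃ : ZMod d) ∈ A ↔ (p₁ : ZMod d) ∈ A) :
    3 ≤ (cycleBoundary A).encard := by
  obtain ⟨k₁, hk₁, hk₁', hk₁A⟩ := exists_natCast_mem_cycleBoundary h₀₁ hne
  obtain ⟨k₂, hk₂, hk₂', hk₂A⟩ := exists_natCast_mem_cycleBoundary h₁₂ (by rw [h₂]; tauto)
  obtain ⟨k₃, hk₃, hk₃', hk₃A⟩ := exists_natCast_mem_cycleBoundary h₂₃ (by rw [h₂, h₃]; tauto)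
  exact three_le_encard_of_mem (natCast_ne_natCast_of_lt_of_lt_add (by omega) (by omega))
    (natCast_ne_natCast_of_lt_of_lt_add (by omega) (by omega))
    (natCast_ne_natCast_of_lt_of_lt_add (by omega) (by omega)) hk₁A hk₂A hk₃A

end CycleBoundary

section ClassEnumeration

open Finset

variable {α β : Type*} {d : ℕ}

def ListsClassesTwice (cl : α → β) (m : ZMod d → α) (t : ℕ) : Prop :=
  2 * t ≤ d ∧ (∀ k, ∃ i < t, cl (m i) = cl (m k)) ∧ ∀ i < t, cl (m ↑(i + t)) = cl (m i)

-- Two classes on opposite sides of `A` alternate as `i < j < i + t < j + t` around the cycle.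
lemma ListsClassesTwice.three_le_encard_cycleBoundary {cl : α → β} {m : ZMod d → α} {t : ℕ}
    (hm : ListsClassesTwice cl m t) {A : Set (ZMod d)}
    (hA : ∀ i j, cl (m i) = cl (m j) → (i ∈ A ↔ j ∈ A)) {a b : ZMod d} (ha : a ∈ A)
    (hb : b ∉ A) : 3 ≤ (cycleBoundary A).encard := by
  obtain ⟨ht, hfirst, hrepeat⟩ := hm
  obtain ⟨i, hi, hia⟩ := hfirst a
  obtain ⟨j, hj, hjb⟩ := hfirst b
  have hij : ¬((i : ZMod d) ∈ A ↔ (j : ZMod d) ∈ A) := by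
    rw [hA _ _ hia, hA _ _ hjb]; tauto
  have hrep : ∀ k < t, ((k + t : ℕ) : ZMod d) ∈ A ↔ (k : ZMod d) ∈ A :=
    fun k hk => hA _ _ (hrepeat k hk)
  rcases lt_or_gt_of_ne (show i ≠ j by rintro rfl; exact hij Iff.rfl) with h | h
  · exact Frank.three_le_encard_cycleBoundary h.le (by omega) (by omega) (by omega) hij
      (hrep i hi) (hrep j hj)
  · exact Frank.three_le_encard_cycleBoundary h.le (by omega) (by omega) (by omega)
      (by tauto) (hrep j hj) (hrep i hi)

lemma two_mul_card_image_le_card [DecidableEq β] {N : Finset α} {cl : α → β}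
    (hpair : ∀ w ∈ N, ∃ w' ∈ N, w' ≠ w ∧ cl w' = cl w) : 2 * #(N.image cl) ≤ #N := by
  rw [card_eq_sum_card_image cl N, mul_comm, ← smul_eq_mul]
  refine card_nsmul_le_sum _ _ _ fun c hc => ?_
  obtain ⟨w, hw, rfl⟩ := mem_image.1 hc
  obtain ⟨w', hw', hne, hcl⟩ := hpair w hw
  exact one_lt_card.2 ⟨w', by simp [hw', hcl], w, by simp [hw], hne⟩

lemma exists_injOn_listsClassesTwice [DecidableEq β] {N : Finset α} (hN : N.Nonempty)
    (cl : α → β) (hpair : ∀ w ∈ N, ∃ w' ∈ N, w' ≠ w ∧ cl w' = cl w) :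
    ∃ (f : ℕ → α) (t : ℕ), 2 * t ≤ #N ∧ MapsTo f (Set.Iio (2 * t)) N ∧
      InjOn f (Set.Iio (2 * t)) ∧ (∀ w ∈ N, ∃ i < t, cl (f i) = cl w) ∧
      ∀ i < t, cl (f (i + t)) = cl (f i) := by
  set T := N.image cl
  set t := #T
  have htpos : 0 < t := card_pos.2 (hN.image cl)
  have hmembers : ∀ c : T, ∃ w₁ w₂, w₁ ∈ N ∧ w₂ ∈ N ∧ w₁ ≠ w₂ ∧ cl w₁ = c ∧ cl w₂ = c := by
    rintro ⟨c, hc⟩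
    obtain ⟨w, hw, rfl⟩ := mem_image.1 hc
    obtain ⟨w', hw', hne, hcl⟩ := hpair w hw
    exact ⟨w, w', hw, hw', hne.symm, rfl, hcl⟩
  choose r₁ r₂ hr₁ hr₂ hr hcl₁ hcl₂ using hmembers
  set e : Fin t ≃ T := T.equivFin.symm
  -- Entry `n < 2 * t` is a member of the class numbered `n % t`: its first chosen member if
  -- `n < t`, its second otherwise.
  set cls : ℕ → T := fun n => e ⟨n % t, Nat.mod_lt _ htpos⟩
  set f : ℕ → α := fun n => if n < t then r₁ (cls n) else r₂ (cls n)
  have hclf : ∀ n, cl (f n) = cls n := by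
    intro n; simp only [f]; split_ifs <;> simp [hcl₁, hcl₂]
  have hmod : ∀ n < 2 * t, n % t = if n < t then n else n - t := by
    intro n hn
    split_ifs with h
    · exact Nat.mod_eq_of_lt h
    · rw [Nat.mod_eq_sub_mod (by omega), Nat.mod_eq_of_lt (by omega)]
  refine ⟨f, t, two_mul_card_image_le_card hpair, fun n _ => ?_, fun i hi j hj hfij => ?_,
    fun w hw => ?_, fun i hi => ?_⟩
  · simp only [f]; split_ifs <;> simp [hr₁, hr₂]
  · have hcls : cls i = cls j := Subtype.ext (by rw [← hclf, ← hclf, hfij])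
    have hmodeq : i % t = j % t := Fin.mk.inj_iff.1 (e.injective hcls)
    rw [hmod _ hi, hmod _ hj] at hmodeq
    simp only [f] at hfij
    split_ifs at hmodeq hfij
    · exact hmodeq
    · exact absurd (hfij.trans (congrArg r₂ hcls.symm)) (hr _)
    · exact absurd ((congrArg r₁ hcls).trans hfij.symm) (hr _)
    · omega
  · set c : T := ⟨cl w, mem_image_of_mem cl hw⟩
    refine ⟨e.symm c, (e.symm c).2, ?_⟩
    simp [hclf, cls, Nat.mod_eq_of_lt (e.symm c).2, c]
  · simp [hclf, cls]

lemma exists_equiv_listsClassesTwice [NeZero d] [DecidableEq β] {N : Finset α}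
    (hN : #N = d) (cl : α → β) (hpair : ∀ w ∈ N, ∃ w' ∈ N, w' ≠ w ∧ cl w' = cl w) :
    ∃ (g : ZMod d ≃ N) (t : ℕ), ListsClassesTwice cl (fun k => (g k : α)) t := by
  obtain ⟨f, t, ht, hmaps, hinj, hfirst, hrepeat⟩ :=
    exists_injOn_listsClassesTwice (card_pos.1 (hN ▸ Nat.pos_of_neZero d)) cl hpair
  rw [hN] at ht
  obtain ⟨g, hg⟩ := MapsTo.exists_equiv_extend_of_card_eq (s := {k : ZMod d | k.val < 2 * t})
    (f := fun k => f k.val) (by rw [ZMod.card, hN]) (fun k hk => hmaps hk)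
    (fun i hi j hj hij => ZMod.val_injective d (hinj hi hj hij))
  have hgf : ∀ n < 2 * t, (g n : α) = f n := by
    intro n hn
    have hval : (n : ZMod d).val = n := ZMod.val_cast_of_lt (by omega)
    rw [hg _ (by simpa [hval] using hn), hval]
  refine ⟨g, t, ht, fun k => ?_, fun i hi => ?_⟩ <;> dsimp only
  · obtain ⟨i, hi, hik⟩ := hfirst _ (g k).2
    exact ⟨i, hi, by rw [hgf i (by omega), hik]⟩
  · rw [hgf _ (by omega), hgf _ (by omega), hrepeat i hi]

end ClassEnumeration

section LocalCubicMod

variable {G : SimpleGraph V} {v : V} {d : ℕ} {m : ZMod d → V}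
  {S : Set ({w : V // w ≠ v} ⊕ ZMod d)}

def minusVertex (G : SimpleGraph V) (v : V) : SimpleGraph {w : V // w ≠ v} :=
  G.comap Subtype.val

lemma localCubicMod_adj_inl_inl {w w' : {w : V // w ≠ v}} :
    (localCubicMod G v d m).Adj (Sum.inl w) (Sum.inl w') ↔ G.Adj w w' := by
  simp only [localCubicMod, fromRel_adj, lcmRel, ne_eq, Sum.inl.injEq, G.adj_comm w.1]
  exact ⟨fun h => h.2.elim id id,
    fun h => ⟨fun hw => G.ne_of_adj h (congrArg Subtype.val hw.symm), .inl h⟩⟩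

lemma localCubicMod_adj_inl_inr {w : {w : V // w ≠ v}} {k : ZMod d} :
    (localCubicMod G v d m).Adj (Sum.inl w) (Sum.inr k) ↔ w.1 = m k := by
  simp [localCubicMod, lcmRel]

lemma localCubicMod_adj_inr_add_one (hd : 1 < d) (k : ZMod d) :
    (localCubicMod G v d m).Adj (Sum.inr k) (Sum.inr (k + 1)) := by
  have : Fact (1 < d) := ⟨hd⟩
  simp [localCubicMod, lcmRel]

lemma injective_cycleEdge {W : Type*} (hd : 3 ≤ d) :
    Function.Injective fun k : ZMod d => (s(Sum.inr k, Sum.inr (k + 1)) : Sym2 (W ⊕ ZMod d)) := by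
  intro k l hkl
  rcases Sym2.eq_iff.1 hkl with ⟨h, -⟩ | ⟨h₁, h₂⟩
  · exact Sum.inr_injective h
  · have h₁ := Sum.inr_injective h₁
    have h₂ := Sum.inr_injective h₂
    have htwo : ((2 : ℕ) : ZMod d) = 0 := by push_cast; linear_combination h₂ - h₁
    rw [ZMod.natCast_eq_zero_iff] at htwo
    exact absurd (Nat.le_of_dvd two_pos htwo) (by omega)

lemma image_cycleBoundary_subset_edgeCut (hd : 1 < d) :
    (fun k => s(Sum.inr k, Sum.inr (k + 1))) '' cycleBoundary (Sum.inr ⁻¹' S) ⊆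
      edgeCut (localCubicMod G v d m) S := by
  rintro _ ⟨k, hk, rfl⟩
  exact mk_mem_edgeCut (localCubicMod_adj_inr_add_one hd k) hk

-- Contracting the cycle back to `v` lifts every edge of the corresponding cut of `G`.
lemma three_le_encard_edgeCut_of_forall_inr_notMem (h3 : ThreeEdgeConn G)
    (hm : Set.range m = G.neighborSet v) {w : {w : V // w ≠ v}} (hw : Sum.inl w ∈ S)
    (hS : ∀ k, Sum.inr k ∉ S) : 3 ≤ (edgeCut (localCubicMod G v d m) S).encard := by
  set SG : Set V := {x | ∃ hx : x ≠ v, Sum.inl ⟨x, hx⟩ ∈ S}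
  have hSG : 3 ≤ (edgeCut G SG).encard :=
    (threeEdgeConn_iff_three_le_encard_edgeCut.1 h3).2 SG ⟨w, w.2, hw⟩
      ⟨v, fun ⟨hv, _⟩ => hv rfl⟩
  refine hSG.trans ((encard_le_encard ?_).trans
    (encard_image_le (Sym2.map (Sum.elim Subtype.val fun _ => v)) _))
  rintro _ ⟨a, ⟨ha, haS⟩, b, hb, hab, rfl⟩
  by_cases hbv : b = v
  · subst hbv
    obtain ⟨k, hk⟩ : a ∈ Set.range m := hm ▸ hab.symm
    exact ⟨_, mk_mem_edgeCut (a := Sum.inl ⟨a, ha⟩) (localCubicMod_adj_inl_inr.2 hk.symm)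
      (by simp [haS, hS]), rfl⟩
  · exact ⟨_, mk_mem_edgeCut (a := Sum.inl ⟨a, ha⟩) (b := Sum.inl ⟨b, hbv⟩)
      (localCubicMod_adj_inl_inl.2 hab) (by simpa [haS] using fun h => hb ⟨hbv, h⟩), rfl⟩

lemma three_le_encard_edgeCut_of_adj_inl (hd : 3 ≤ d) {a b : ZMod d} (ha : Sum.inr a ∈ S)
    (hb : Sum.inr b ∉ S) {w : {w : V // w ≠ v}} {z : {w : V // w ≠ v} ⊕ ZMod d}
    (hwz : (localCubicMod G v d m).Adj (Sum.inl w) z) (hcross : ¬(Sum.inl w ∈ S ↔ z ∈ S)) :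
    3 ≤ (edgeCut (localCubicMod G v d m) S).encard := by
  have : NeZero d := ⟨by omega⟩
  set E : Set (Sym2 ({w : V // w ≠ v} ⊕ ZMod d)) :=
    (fun k => s(Sum.inr k, Sum.inr (k + 1))) '' cycleBoundary (Sum.inr ⁻¹' S)
  have hE : E.encard = (cycleBoundary (Sum.inr ⁻¹' S)).encard :=
    (injective_cycleEdge hd).injOn.encard_image
  have hwzE : s(Sum.inl w, z) ∉ E := by
    rintro ⟨k, -, hk⟩
    rcases Sym2.eq_iff.1 hk with ⟨h, -⟩ | ⟨-, h⟩ <;> simp_all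
  calc (3 : ℕ∞) = 2 + 1 := rfl
    _ ≤ E.encard + 1 := by
      rw [hE]; gcongr; exact two_le_encard_cycleBoundary (A := Sum.inr ⁻¹' S) ha hb
    _ = (insert s(Sum.inl w, z) E).encard := (encard_insert_of_notMem hwzE).symm
    _ ≤ _ := encard_le_encard (insert_subset (mk_mem_edgeCut hwz hcross)
      (image_cycleBoundary_subset_edgeCut (by omega)))

lemma three_le_encard_edgeCut_of_listsClassesTwice (hd : 3 ≤ d)
    {m₀ : ZMod d → {w : V // w ≠ v}} {t : ℕ}
    (hm : ListsClassesTwice (minusVertex G v).connectedComponentMk m₀ t) {a b : ZMod d}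
    (ha : Sum.inr a ∈ S) (hb : Sum.inr b ∉ S)
    (hold : ∀ w z, (localCubicMod G v d (fun k => (m₀ k).1)).Adj (Sum.inl w) z →
      (Sum.inl w ∈ S ↔ z ∈ S)) :
    3 ≤ (edgeCut (localCubicMod G v d (fun k => (m₀ k).1)) S).encard := by
  have hcomp : ∀ w w' : {w : V // w ≠ v}, (minusVertex G v).Reachable w w' →
      (Sum.inl w ∈ S ↔ Sum.inl w' ∈ S) := by
    intro w w' hww'
    by_contra hne
    wlog hw : Sum.inl w ∈ S generalizing w w'
    · exact this w' w hww'.symm (by tauto) (by tauto)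
    obtain ⟨x, hx, y, hy, hxy⟩ :=
      exists_boundary_adj_of_reachable (S := {x | Sum.inl x ∈ S}) hww' hw (by tauto)
    exact hy ((hold x _ (localCubicMod_adj_inl_inl.2 hxy)).1 hx)
  have hA : ∀ i j, (minusVertex G v).connectedComponentMk (m₀ i) =
      (minusVertex G v).connectedComponentMk (m₀ j) → (i ∈ Sum.inr ⁻¹' S ↔ j ∈ Sum.inr ⁻¹' S) := by
    intro i j hij
    rw [mem_preimage, mem_preimage, ← hold _ _ (localCubicMod_adj_inl_inr.2 rfl),
      ← hold _ _ (localCubicMod_adj_inl_inr.2 rfl)]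
    exact hcomp _ _ (ConnectedComponent.eq.1 hij)
  exact (hm.three_le_encard_cycleBoundary hA ha hb).trans <|
    ((injective_cycleEdge hd).injOn.encard_image).symm.le.trans
      (encard_le_encard (image_cycleBoundary_subset_edgeCut (by omega)))

lemma three_le_encard_edgeCut_localCubicMod (h3 : ThreeEdgeConn G) (hd : 3 ≤ d)
    {m₀ : ZMod d → {w : V // w ≠ v}} (hrange : Set.range (fun k => (m₀ k).1) = G.neighborSet v)
    {t : ℕ} (hm : ListsClassesTwice (minusVertex G v).connectedComponentMk m₀ t)
    (hS : S.Nonempty) (hSc : Sᶜ.Nonempty) :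
    3 ≤ (edgeCut (localCubicMod G v d (fun k => (m₀ k).1)) S).encard := by
  by_cases hout : ∀ k, Sum.inr k ∉ S
  · obtain ⟨w | k, hx⟩ := hS
    · exact three_le_encard_edgeCut_of_forall_inr_notMem h3 hrange hx hout
    · exact absurd hx (hout k)
  by_cases hin : ∀ k, Sum.inr k ∈ S
  · obtain ⟨w | k, hx⟩ := hSc
    · rw [← edgeCut_compl]
      exact three_le_encard_edgeCut_of_forall_inr_notMem h3 hrange hx fun k h => h (hin k)
    · exact absurd (hin k) hx
  simp only [not_forall, not_not] at hout hin
  obtain ⟨a, ha⟩ := hout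
  obtain ⟨b, hb⟩ := hin
  by_cases hold : ∀ w z, (localCubicMod G v d (fun k => (m₀ k).1)).Adj (Sum.inl w) z →
      (Sum.inl w ∈ S ↔ z ∈ S)
  · exact three_le_encard_edgeCut_of_listsClassesTwice hd hm ha hb hold
  · simp only [not_forall] at hold
    obtain ⟨w, z, hwz, hcross⟩ := hold
    exact three_le_encard_edgeCut_of_adj_inl hd ha hb hwz hcross

lemma exists_adj_ne_connectedComponentMk_eq (h3 : ThreeEdgeConn G) {w : {w : V // w ≠ v}}
    (hw : G.Adj v w) : ∃ w' : {w : V // w ≠ v}, G.Adj v w' ∧ w' ≠ w ∧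
      (minusVertex G v).connectedComponentMk w' = (minusVertex G v).connectedComponentMk w := by
  by_contra! hno
  set C : Set V := {x | ∃ hx : x ≠ v, (minusVertex G v).Reachable w ⟨x, hx⟩}
  have hcut : edgeCut G C ⊆ {s(w.1, v)} := by
    rintro _ ⟨a, ⟨ha, hwa⟩, b, hb, hab, rfl⟩
    by_cases hbv : b = v
    · subst hbv
      have : (⟨a, ha⟩ : {w : V // w ≠ b}) = w := by
        by_contra hne
        exact hno ⟨a, ha⟩ hab.symm hne (ConnectedComponent.eq.2 hwa.symm)
      simp [← this]
    · exact absurd ⟨hbv, hwa.trans (Adj.reachable (G := minusVertex G v) hab)⟩ hb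
  have := ((threeEdgeConn_iff_three_le_encard_edgeCut.1 h3).2 C ⟨w, w.2, Reachable.refl _⟩
    ⟨v, fun ⟨hv, _⟩ => hv rfl⟩).trans ((encard_le_encard hcut).trans (encard_singleton _).le)
  exact absurd this (by decide)

open Finset in
lemma exists_finset_mem_iff_adj [DecidableEq V] (hdeg : (G.neighborSet v).ncard = d)
    (hd : d ≠ 0) :
    ∃ N : Finset {w : V // w ≠ v}, #N = d ∧ ∀ w, w ∈ N ↔ G.Adj v w := by
  have hfin : (G.neighborSet v).Finite := finite_of_ncard_ne_zero (hdeg ▸ hd)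
  refine ⟨hfin.toFinset.subtype (· ≠ v), ?_, fun w => by simp⟩
  rw [card_subtype, filter_true_of_mem fun w hw => (G.ne_of_adj (by simpa using hw)).symm,
    ← hdeg, ncard_eq_toFinset_card _ hfin]

end LocalCubicMod

theorem stmt_10 (G : SimpleGraph V) (h3 : ThreeEdgeConn G) (v : V) (d : ℕ)
    (hd3 : 3 ≤ d) (hdeg : (G.neighborSet v).ncard = d) :
    ∃ m : ZMod d → V, Function.Injective m ∧ Set.range m = G.neighborSet v ∧
      ThreeEdgeConn (localCubicMod G v d m) := by
  classical
  have : NeZero d := ⟨by omega⟩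
  obtain ⟨N, hNcard, hN⟩ := exists_finset_mem_iff_adj hdeg (by omega)
  obtain ⟨g, t, hm⟩ := exists_equiv_listsClassesTwice hNcard (minusVertex G v).connectedComponentMk
    fun w hw => by
      obtain ⟨w', hvw', hne, hcl⟩ := exists_adj_ne_connectedComponentMk_eq h3 ((hN w).1 hw)
      exact ⟨w', (hN w').2 hvw', hne, hcl⟩
  have hrange : Set.range (fun k => (g k : {w : V // w ≠ v}).1) = G.neighborSet v := by
    ext x
    refine ⟨fun ⟨k, hk⟩ => hk ▸ (hN _).1 (g k).2, fun hx => ?_⟩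
    obtain ⟨k, hk⟩ := g.surjective ⟨⟨x, (G.ne_of_adj hx).symm⟩, (hN _).2 hx⟩
    exact ⟨k, by simp only [hk]⟩
  exact ⟨_, Subtype.val_injective.comp (Subtype.val_injective.comp g.injective), hrange,
    threeEdgeConn_iff_three_le_encard_edgeCut.2 ⟨⟨Sum.inr 0⟩, fun S hS hSc =>
      three_le_encard_edgeCut_localCubicMod h3 hd3 hrange hm hS hSc⟩⟩

end Frank
end
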